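/- arXiv:1903.02960 — 5 statements merged into one kernel-verified Lean document; each statement's English description precedes it below -/
import Mathlib

section
/- Let A be an associative (not necessarily commutative) ring, let x, y ∈ A and let l ≥ 0 be an integer. Then (l+1)·(y x^l) = Σ_{i=2}^{l+1} (−1)^i · binom(l+1, i) · [y, x^{(i−1)}] · x^{l+1−i} + Σ_{j=0}^{l} x^j y x^{l−j}, where [a,b] = ab − ba denotes the commutator and [y, x^{(p)}] denotes the iterated commutator [[…[[y,x],x]…],x] with p occurrences of x. (In particular, applied inside the universal enveloping algebra U(L) of a Lie algebra L, this gives the identity of the paper's Lemma for any x, y ∈ L.) -/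
/-- Iterated commutator `[y, x^{(p)}] = [[…[[y,x],x]…],x]` with `p` occurrences of `x`. -/
def iterBracket {A : Type*} [Ring A] (y x : A) : ℕ → A
  | 0 => y
  | p + 1 => iterBracket y x p * x - x * iterBracket y x p

open Finset

lemma sum_choose_aux (n k : ℕ) : ∑ j ∈ Finset.range n, j.choose k = n.choose (k + 1) := by
  induction n with
  | zero => simp
  | succ n ih =>
    rw [Finset.sum_range_succ, ih, Nat.choose_succ_succ]
    exact Nat.add_comm _ _

lemma key_aux {A : Type*} [Ring A] (f a b : ℕ → A) (n : ℕ)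
    (h0 : f 0 = a 0) (hs : ∀ k, f (k + 1) = a (k + 1) - b k) (hlast : a (n + 1) = 0) :
    ∑ k ∈ Finset.range (n + 1), a k - ∑ k ∈ Finset.range (n + 1), b k
      = ∑ k ∈ Finset.range (n + 2), f k := by
  rw [Finset.sum_range_succ' f (n + 1)]
  simp only [hs, h0]
  rw [Finset.sum_sub_distrib]
  have h2 : (∑ k ∈ Finset.range (n + 1), a (k + 1)) + a 0 = ∑ k ∈ Finset.range (n + 1), a k := by
    rw [← Finset.sum_range_succ' a (n + 1), Finset.sum_range_succ, hlast, add_zero]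
  rw [← h2]
  abel

lemma pow_mul_expand {A : Type*} [Ring A] (x y : A) : ∀ j : ℕ, x ^ j * y =
    ∑ k ∈ Finset.range (j + 1),
      ((-1 : A) ^ k * (j.choose k : A)) * iterBracket y x k * x ^ (j - k)
  | 0 => by simp [iterBracket]
  | (j + 1) => by
    have ih := pow_mul_expand x y j
    have hcomm : ∀ k : ℕ, x * ((-1 : A) ^ k * (j.choose k : A))
        = ((-1 : A) ^ k * (j.choose k : A)) * x := by
      intro k
      have h1 : Commute ((-1 : A) ^ k) x := (Commute.neg_one_left x).pow_left k
      have h2 : Commute ((j.choose k : A)) x := (Nat.cast_commute _ _)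
      exact ((h1.mul_left h2).symm).eq
    have hx : ∀ k, x * iterBracket y x k
        = iterBracket y x k * x - iterBracket y x (k + 1) := by
      intro k; simp [iterBracket]
    rw [pow_succ', mul_assoc, ih, Finset.mul_sum]
    have hterm : ∀ k ∈ Finset.range (j + 1),
        x * ((-1 : A) ^ k * (j.choose k : A) * iterBracket y x k * x ^ (j - k))
        = ((-1 : A) ^ k * (j.choose k : A)) * iterBracket y x k * x ^ (j + 1 - k)
          - ((-1 : A) ^ k * (j.choose k : A)) * iterBracket y x (k + 1) * x ^ (j - k) := by
      intro k hk
      have hk' : k ≤ j := by simpa [Nat.lt_succ_iff] using hk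
      have hp : x ^ (j + 1 - k) = x * x ^ (j - k) := by
        rw [← pow_succ']; congr 1; omega
      calc x * ((-1 : A) ^ k * (j.choose k : A) * iterBracket y x k * x ^ (j - k))
          = (x * ((-1 : A) ^ k * (j.choose k : A))) * iterBracket y x k * x ^ (j - k) := by
            noncomm_ring
        _ = ((-1 : A) ^ k * (j.choose k : A)) * (x * iterBracket y x k) * x ^ (j - k) := by
            rw [hcomm]; noncomm_ring
        _ = ((-1 : A) ^ k * (j.choose k : A))
              * (iterBracket y x k * x - iterBracket y x (k + 1)) * x ^ (j - k) := by
            rw [hx]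
        _ = ((-1 : A) ^ k * (j.choose k : A)) * iterBracket y x k * (x * x ^ (j - k))
              - ((-1 : A) ^ k * (j.choose k : A)) * iterBracket y x (k + 1) * x ^ (j - k) := by
            noncomm_ring
        _ = _ := by rw [hp]
    rw [Finset.sum_congr rfl hterm, Finset.sum_sub_distrib]
    exact key_aux
      (fun k => ((-1 : A) ^ k * ((j + 1).choose k : A)) * iterBracket y x k * x ^ (j + 1 - k))
      (fun k => ((-1 : A) ^ k * (j.choose k : A)) * iterBracket y x k * x ^ (j + 1 - k))
      (fun k => ((-1 : A) ^ k * (j.choose k : A)) * iterBracket y x (k + 1) * x ^ (j - k))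
      j
      (by simp)
      (by
        intro k
        have hpas : ((j + 1).choose (k + 1) : A) = (j.choose k : A) + (j.choose (k + 1) : A) := by
          rw [Nat.choose_succ_succ]; push_cast; rfl
        have hexp : j + 1 - (k + 1) = j - k := by omega
        beta_reduce
        rw [hexp, hpas, pow_succ]
        noncomm_ring)
      (by simp [Nat.choose_eq_zero_of_lt (Nat.lt_succ_self j)])

lemma sum_expand {A : Type*} [Ring A] (x y : A) (l : ℕ) :
    ∑ j ∈ Finset.range (l + 1), x ^ j * y * x ^ (l - j)
      = ∑ k ∈ Finset.range (l + 1),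
          ((-1 : A) ^ k * ((l + 1).choose (k + 1) : A)) * iterBracket y x k * x ^ (l - k) := by
  have h1 : ∀ j ∈ Finset.range (l + 1), x ^ j * y * x ^ (l - j)
      = ∑ k ∈ Finset.range (l + 1),
          ((-1 : A) ^ k * (j.choose k : A)) * iterBracket y x k * x ^ (l - k) := by
    intro j hj
    have hj' : j ≤ l := by simpa [Nat.lt_succ_iff] using hj
    rw [pow_mul_expand, Finset.sum_mul]
    have h2 : ∀ k ∈ Finset.range (j + 1),
        ((-1 : A) ^ k * (j.choose k : A)) * iterBracket y x k * x ^ (j - k) * x ^ (l - j)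
        = ((-1 : A) ^ k * (j.choose k : A)) * iterBracket y x k * x ^ (l - k) := by
      intro k hk
      have hk' : k ≤ j := by simpa [Nat.lt_succ_iff] using hk
      rw [mul_assoc, ← pow_add]
      congr 2
      omega
    rw [Finset.sum_congr rfl h2]
    apply Finset.sum_subset (Finset.range_subset_range.2 (by omega))
    intro k hk hnk
    have : j < k := by simp only [Finset.mem_range, Nat.lt_succ_iff, not_le] at hnk ⊢; omega
    simp [Nat.choose_eq_zero_of_lt this]
  rw [Finset.sum_congr rfl h1, Finset.sum_comm]
  apply Finset.sum_congr rfl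
  intro k _
  have hpull : ∀ j : ℕ, ((-1 : A) ^ k * (j.choose k : A)) * iterBracket y x k * x ^ (l - k)
      = (j.choose k : A) * ((-1 : A) ^ k * iterBracket y x k * x ^ (l - k)) := by
    intro j
    rw [← (Nat.cast_commute (j.choose k) ((-1 : A) ^ k)).eq]
    noncomm_ring
  simp only [hpull]
  rw [← Finset.sum_mul, ← Nat.cast_sum, sum_choose_aux]
  rw [← (Nat.cast_commute ((l + 1).choose (k + 1)) ((-1 : A) ^ k)).eq]
  noncomm_ring

theorem stmt0 {A : Type*} [Ring A] (x y : A) (l : ℕ) :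
    (l + 1 : ℕ) • (y * x ^ l) =
      (∑ i ∈ Finset.Icc 2 (l + 1),
        ((-1 : A) ^ i * (Nat.choose (l + 1) i : A)) * iterBracket y x (i - 1) * x ^ (l + 1 - i))
      + ∑ j ∈ Finset.range (l + 1), x ^ j * y * x ^ (l - j) := by
  set s : ℕ → A := fun k =>
    ((-1 : A) ^ k * ((l + 1).choose (k + 1) : A)) * iterBracket y x k * x ^ (l - k) with hs
  have hmap : Finset.Icc 2 (l + 1) = (Finset.Icc 1 l).map (addRightEmbedding 1) := by
    rw [Finset.map_add_right_Icc]
  have hfirst : (∑ i ∈ Finset.Icc 2 (l + 1),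
      ((-1 : A) ^ i * (Nat.choose (l + 1) i : A)) * iterBracket y x (i - 1) * x ^ (l + 1 - i))
      = ∑ k ∈ Finset.Icc 1 l, (-(s k)) := by
    rw [hmap, Finset.sum_map]
    apply Finset.sum_congr rfl
    intro k _
    simp only [addRightEmbedding_apply, hs]
    have h1 : k + 1 - 1 = k := by omega
    have h2 : l + 1 - (k + 1) = l - k := by omega
    rw [h1, h2, pow_succ]
    noncomm_ring
  have hsplit : ∑ k ∈ Finset.range (l + 1), s k = s 0 + ∑ k ∈ Finset.Icc 1 l, s k := by
    rw [Finset.range_eq_Ico, Finset.sum_eq_sum_Ico_succ_bot (by omega), Finset.Ico_add_one_right_eq_Icc]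
  rw [sum_expand, ← hs, hfirst, hsplit, Finset.sum_neg_distrib]
  have hs0 : s 0 = (↑(l + 1) : A) * (y * x ^ l) := by
    simp [hs, iterBracket, mul_assoc]
  rw [nsmul_eq_mul]
  rw [hs0]
  abel
end

section
/- Let A be an associative algebra over a field k, let λ ∈ k, and let R : A → A be a Rota–Baxter operator of weight λ. Then for every t ≥ 1 and all b₁, …, b_t ∈ A, R(b₁)·R(b₂)···R(b_t) = R( Σ_{∅ ≠ S ⊆ {1,…,t}} λ^{|S|−1} · ∏_{i=1}^{t} c_i^S ), where the product ∏_{i=1}^{t} c_i^S is taken in the order i = 1, …, t and c_i^S = b_i if i ∈ S, while c_i^S = R(b_i) if i ∉ S. -/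
/-!
Induction on `t`, peeling off the last factor. Splitting the nonempty subsets of `{1, …, t+1}`
according to whether they contain `t+1` gives, with `Σₜ` the sum for `b₁, …, bₜ` and `b = b_{t+1}`,
`Σ_{t+1} = Σₜ R(b) + R(b₁)⋯R(bₜ) b + λ Σₜ b`. By induction `R(b₁)⋯R(bₜ) = R(Σₜ)`, so the right-hand
side is exactly the argument of `R` in the Rota–Baxter identity for `R(Σₜ) R(b)`.
-/

open Finset

theorem Finset.powerset_map {α β : Type*} (e : α ↪ β) (s : Finset α) :
    (s.map e).powerset = s.powerset.map (mapEmbedding e).toEmbedding := by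
  ext S
  simp only [mem_powerset, mem_map, RelEmbedding.coe_toEmbedding, mapEmbedding_apply,
    subset_map_iff, eq_comm]

theorem Fin.sum_powerset_univ_succ {M : Type*} [AddCommMonoid M] {n : ℕ}
    (f : Finset (Fin (n + 1)) → M) :
    ∑ S ∈ (univ : Finset (Fin (n + 1))).powerset, f S =
      ∑ T ∈ (univ : Finset (Fin n)).powerset, f (T.map Fin.castSuccEmb) +
        ∑ T ∈ (univ : Finset (Fin n)).powerset,
          f (insert (Fin.last n) (T.map Fin.castSuccEmb)) := by
  have hlast : Fin.last n ∉ (univ : Finset (Fin n)).map Fin.castSuccEmb := by simp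
  rw [Fin.univ_castSuccEmb, cons_eq_insert, sum_powerset_insert hlast, powerset_map, sum_map,
    sum_map]
  rfl

theorem Finset.sum_powerset_pow_card_smul {α R M : Type*} [CommSemiring R] [AddCommMonoid M]
    [Module R M] [DecidableEq α] (s : Finset α) (r : R) (g : Finset α → M) :
    ∑ S ∈ s.powerset, r ^ #S • g S =
      g ∅ + r • ∑ S ∈ s.powerset.filter (fun S => S ≠ ∅), r ^ (#S - 1) • g S := by
  rw [← add_sum_erase _ _ (empty_mem_powerset s), filter_ne', smul_sum, card_empty, pow_zero,
    one_smul]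
  congr 1
  refine sum_congr rfl fun S hS => ?_
  have hS : 0 < #S := card_pos.2 (nonempty_of_ne_empty (ne_of_mem_erase hS))
  rw [smul_smul, ← pow_succ', Nat.sub_add_cancel hS]

def IsRotaBaxter {k A : Type*} [CommSemiring k] [Semiring A] [Algebra k A] (lam : k)
    (R : A → A) : Prop :=
  ∀ x y : A, R x * R y = R (R x * y + x * R y + lam • (x * y))

namespace RotaBaxter

section Monomial

variable {A : Type*} [Semiring A] (R : A → A) {t : ℕ}

/-- The product `c₁^S ⋯ cₜ^S`. -/
def monomial (b : Fin t → A) (S : Finset (Fin t)) : A :=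
  (List.ofFn fun i => if i ∈ S then b i else R (b i)).prod

theorem monomial_empty (b : Fin t → A) :
    monomial R b ∅ = (List.ofFn fun i => R (b i)).prod := by
  simp [monomial]

theorem monomial_map_castSucc (b : Fin (t + 1) → A) (T : Finset (Fin t)) :
    monomial R b (T.map Fin.castSuccEmb) = monomial R (Fin.init b) T * R (b (Fin.last t)) := by
  rw [monomial, List.ofFn_succ', List.prod_concat]
  simp [monomial, Fin.init]

theorem monomial_insert_last (b : Fin (t + 1) → A) (T : Finset (Fin t)) :
    monomial R b (insert (Fin.last t) (T.map Fin.castSuccEmb)) =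
      monomial R (Fin.init b) T * b (Fin.last t) := by
  rw [monomial, List.ofFn_succ', List.prod_concat]
  simp [monomial, Fin.init]

end Monomial

variable {k A : Type*} [CommSemiring k] [Semiring A] [Algebra k A]

def expansion (lam : k) (R : A → A) {t : ℕ} (b : Fin t → A) : A :=
  ∑ S ∈ univ.powerset.filter (fun S : Finset (Fin t) => S ≠ ∅), lam ^ (#S - 1) • monomial R b S

theorem expansion_succ (lam : k) (R : A → A) {t : ℕ} (b : Fin (t + 1) → A) :
    expansion lam R b =
      expansion lam R (Fin.init b) * R (b (Fin.last t)) +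
        monomial R (Fin.init b) ∅ * b (Fin.last t) +
          lam • (expansion lam R (Fin.init b) * b (Fin.last t)) := by
  have hne (T : Finset (Fin t)) : insert (Fin.last t) (T.map Fin.castSuccEmb) ≠ ∅ :=
    insert_ne_empty _ _
  have hcard (T : Finset (Fin t)) : #(insert (Fin.last t) (T.map Fin.castSuccEmb)) - 1 = #T := by
    rw [card_insert_of_notMem (by simp), card_map, Nat.add_sub_cancel]
  calc expansion lam R b
      = expansion lam R (Fin.init b) * R (b (Fin.last t)) +
          (∑ T ∈ univ.powerset, lam ^ #T • monomial R (Fin.init b) T) * b (Fin.last t) := by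
        simp only [expansion, sum_filter, Fin.sum_powerset_univ_succ, hne, hcard, ne_eq,
          map_eq_empty, monomial_map_castSucc, monomial_insert_last, card_map, if_true,
          not_false_eq_true, sum_mul, ite_mul, zero_mul, smul_mul_assoc]
    _ = _ := by
        rw [sum_powerset_pow_card_smul, add_mul, smul_mul_assoc, add_assoc]
        rfl

theorem prod_ofFn_eq_expansion {lam : k} {R : A → A} (hR : IsRotaBaxter lam R) :
    ∀ {t : ℕ} (b : Fin (t + 1) → A),
      (List.ofFn fun i => R (b i)).prod = R (expansion lam R b)
  | 0, b => by rw [expansion_succ]; simp [expansion, monomial, filter_ne']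
  | t + 1, b => by
    have ih := prod_ofFn_eq_expansion hR (Fin.init b)
    rw [List.ofFn_succ', List.prod_concat, expansion_succ, monomial_empty]
    simp only [Fin.init] at ih ⊢
    rw [ih, hR]
    congr 1
    abel

end RotaBaxter

theorem stmt1 {k A : Type*} [Field k] [Ring A] [Algebra k A] (lam : k)
    (R : A →ₗ[k] A)
    (hR : ∀ x y : A, R x * R y = R (R x * y + x * R y + lam • (x * y)))
    (t : ℕ) (ht : 1 ≤ t) (b : Fin t → A) :
    (List.ofFn fun i => R (b i)).prod =
      R (∑ S ∈ Finset.univ.powerset.filter (fun S : Finset (Fin t) => S ≠ ∅),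
          lam ^ (S.card - 1) • (List.ofFn fun i => if i ∈ S then b i else R (b i)).prod) := by
  obtain ⟨t, rfl⟩ := Nat.exists_eq_add_of_le' ht
  exact RotaBaxter.prod_ofFn_eq_expansion hR b
end

section
/- Let A be an associative algebra over a field k, let λ ∈ k, and let R : A → A be a Rota–Baxter operator of weight λ. Define three bilinear operations on A by x ≻ y = R(x)·y, x ≺ y = x·R(y), and x · y = λ·(xy). Then (A, ≺, ≻, ·) is a postassociative (dendriform tri-)algebra, i.e., for all x, y, z ∈ A: (x≺y)≺z = x≺(y≻z + y≺z + y·z), (x≻y)≺z = x≻(y≺z), (x≻y + x≺y + x·y)≻z = x≻(y≻z), (x≻y)·z = x≻(y·z), (x≺y)·z = x·(y≻z), (x·y)≺z = x·(y≺z), and (x·y)·z = x·(y·z). -/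
theorem stmt4 {k A : Type*} [Field k] [Ring A] [Algebra k A] (lam : k)
    (R : A →ₗ[k] A)
    (hR : ∀ x y : A, R x * R y = R (R x * y + x * R y + lam • (x * y))) :
    ∀ x y z : A,
      (x * R y) * R z = x * R (R y * z + y * R z + lam • (y * z)) ∧
      (R x * y) * R z = R x * (y * R z) ∧
      R (R x * y + x * R y + lam • (x * y)) * z = R x * (R y * z) ∧
      lam • ((R x * y) * z) = R x * (lam • (y * z)) ∧
      lam • ((x * R y) * z) = lam • (x * (R y * z)) ∧
      (lam • (x * y)) * R z = lam • (x * (y * R z)) ∧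
      lam • ((lam • (x * y)) * z) = lam • (x * (lam • (y * z))) := by
  intro x y z
  refine ⟨?_, ?_, ?_, ?_, ?_, ?_, ?_⟩
  · rw [mul_assoc, hR]
  · rw [mul_assoc]
  · rw [← hR, mul_assoc]
  · rw [mul_smul_comm, mul_assoc]
  · rw [mul_assoc]
  · rw [smul_mul_assoc, mul_assoc]
  · rw [smul_mul_assoc, mul_assoc, mul_smul_comm]
end

section
/- Let L be a Lie algebra over a field k, let λ ∈ k, and let R : L → L be a Rota–Baxter operator of weight λ. Define on L the bilinear product x ∘ y = [R(x), y] and the bracket {x, y} = λ[x, y]. Then (L, {,}, ∘) is a post-Lie algebra: {,} is a Lie bracket, and for all x, y, z ∈ L one has (x∘y)∘z − x∘(y∘z) − (y∘x)∘z + y∘(x∘z) = {y,x}∘z and x∘{y,z} = {x∘y, z} + {y, x∘z}. -/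
theorem stmt6 {k L : Type*} [Field k] [LieRing L] [LieAlgebra k L] (lam : k)
    (R : L →ₗ[k] L)
    (hR : ∀ x y : L, ⁅R x, R y⁆ = R (⁅R x, y⁆ + ⁅x, R y⁆ + lam • ⁅x, y⁆)) :
    -- the bracket {x,y} = λ[x,y] is bilinear
    (∀ x y z : L, lam • ⁅x + y, z⁆ = lam • ⁅x, z⁆ + lam • ⁅y, z⁆) ∧
    (∀ x y z : L, lam • ⁅x, y + z⁆ = lam • ⁅x, y⁆ + lam • ⁅x, z⁆) ∧
    (∀ (c : k) (x y : L), lam • ⁅c • x, y⁆ = c • (lam • ⁅x, y⁆)) ∧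
    (∀ (c : k) (x y : L), lam • ⁅x, c • y⁆ = c • (lam • ⁅x, y⁆)) ∧
    -- the bracket {x,y} = λ[x,y] is alternating and satisfies the Jacobi identity
    (∀ x : L, lam • ⁅x, x⁆ = 0) ∧
    (∀ x y z : L, lam • ⁅x, lam • ⁅y, z⁆⁆ =
      lam • ⁅lam • ⁅x, y⁆, z⁆ + lam • ⁅y, lam • ⁅x, z⁆⁆) ∧
    -- the post-Lie identities for x ∘ y = [R(x), y] and {x,y} = λ[x,y]
    (∀ x y z : L,
      ⁅R ⁅R x, y⁆, z⁆ - ⁅R x, ⁅R y, z⁆⁆ - ⁅R ⁅R y, x⁆, z⁆ + ⁅R y, ⁅R x, z⁆⁆ =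
        ⁅R (lam • ⁅y, x⁆), z⁆) ∧
    (∀ x y z : L,
      ⁅R x, lam • ⁅y, z⁆⁆ = lam • ⁅⁅R x, y⁆, z⁆ + lam • ⁅y, ⁅R x, z⁆⁆) := by
  refine ⟨fun x y z => by rw [add_lie, smul_add],
    fun x y z => by rw [lie_add, smul_add],
    fun c x y => by rw [smul_lie, smul_comm],
    fun c x y => by rw [lie_smul, smul_comm],
    fun x => by rw [lie_self, smul_zero],
    fun x y z => by rw [lie_smul, smul_lie, lie_smul, smul_smul, smul_smul, smul_smul,
      ← smul_add, leibniz_lie, smul_add],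
    fun x y z => ?_,
    fun x y z => by rw [lie_smul, leibniz_lie, smul_add]⟩
  have h2 : R ⁅R x, y⁆ - R ⁅R y, x⁆ - R (lam • ⁅y, x⁆) = ⁅R x, R y⁆ := by
    rw [hR x y]
    rw [show ⁅x, R y⁆ = -⁅R y, x⁆ from (lie_skew _ _).symm,
      show (⁅x, y⁆ : L) = -⁅y, x⁆ from (lie_skew _ _).symm, smul_neg]
    rw [map_add, map_add, map_neg, map_neg]
    abel
  calc ⁅R ⁅R x, y⁆, z⁆ - ⁅R x, ⁅R y, z⁆⁆ - ⁅R ⁅R y, x⁆, z⁆ + ⁅R y, ⁅R x, z⁆⁆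
      = ⁅R ⁅R x, y⁆ - R ⁅R y, x⁆ - ⁅R x, R y⁆, z⁆ + (⁅⁅R x, R y⁆, z⁆ - ⁅R x, ⁅R y, z⁆⁆ + ⁅R y, ⁅R x, z⁆⁆) := by
        rw [sub_lie, sub_lie]; abel
    _ = ⁅R (lam • ⁅y, x⁆), z⁆ := by
        rw [lie_lie]
        rw [show R ⁅R x, y⁆ - R ⁅R y, x⁆ - ⁅R x, R y⁆ = R (lam • ⁅y, x⁆) by
          rw [← h2]; abel]
        abel
end

section
/- Let (C, ∘) be a pre-Lie algebra over a field k of characteristic 0. Then there exist a Lie algebra L over k, a Rota–Baxter operator P : L → L of weight 0 (i.e., [P(x),P(y)] = P([P(x),y] + [x,P(y)]) for all x, y ∈ L), and an injective linear map ι : C → L such that ι(x ∘ y) = [P(ι(x)), ι(y)] for all x, y ∈ C. -/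
/-!
The sub-adjacent Lie algebra `𝔤(C)` of a pre-Lie algebra (bracket `xy - yx`) acts on `C` by left
multiplication: the pre-Lie identity says exactly that `L_{[x,y]} = [L_x, L_y]`. For this
representation the identity map `C → 𝔤(C)` is a relative Rota–Baxter operator, and any relative
Rota–Baxter operator `T : M → 𝔤` induces the weight-zero Rota–Baxter operator `(x, m) ↦ (T m, 0)`
on the semidirect sum `𝔤 ⋉ M`. Embedding `C` as the abelian ideal `M` gives
`ι (x ∘ y) = [P (ι x), ι y]`.
-/

universe u v w

namespace LieAlgebra

variable {R L : Type*} [CommRing R] [LieRing L] [LieAlgebra R L]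

def IsRotaBaxter (P : L →ₗ[R] L) : Prop :=
  ∀ x y : L, ⁅P x, P y⁆ = P (⁅P x, y⁆ + ⁅x, P y⁆)

end LieAlgebra

namespace LieModule

open LieAlgebra LieModule.Cohomology

variable {R L M : Type*} [CommRing R] [LieRing L] [LieAlgebra R L]
  [AddCommGroup M] [Module R M] [LieRingModule L M] [LieModule R L M]

/-- Also called an `𝒪`-operator (Kupershmidt). -/
def IsRelativeRotaBaxter (T : M →ₗ[R] L) : Prop :=
  ∀ m n : M, ⁅T m, T n⁆ = T (⁅T m, n⁆ - ⁅T n, m⁆)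

variable (R L M) in
abbrev SemidirectSum : Type _ := ofTwoCocycle (0 : twoCocycle R L M)

namespace SemidirectSum

variable (R) in
def equivProd : SemidirectSum R L M ≃ₗ[R] L × M := (ofProd 0).symm.linearEquiv R

lemma lie_symm_equivProd (x y : L × M) :
    ⁅(equivProd R).symm x, (equivProd R).symm y⁆ =
      (equivProd R).symm (⁅x.1, y.1⁆, ⁅x.1, y.2⁆ - ⁅y.1, x.2⁆) := by
  rw [bracket_ofTwoCocycle]
  simp only [ZeroMemClass.coe_zero, LinearMap.zero_apply, zero_add]
  rfl

variable (R L) in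
def inr : M →ₗ[R] SemidirectSum R L M :=
  (equivProd R).symm.toLinearMap ∘ₗ LinearMap.inr R L M

lemma inr_apply (m : M) : inr R L m = (equivProd R).symm (0, m) := rfl

lemma inr_injective : Function.Injective (inr R L : M →ₗ[R] SemidirectSum R L M) :=
  (equivProd R).symm.injective.comp LinearMap.inr_injective

def rotaBaxter (T : M →ₗ[R] L) : SemidirectSum R L M →ₗ[R] SemidirectSum R L M :=
  (equivProd R).symm.toLinearMap ∘ₗ LinearMap.inl R L M ∘ₗ T ∘ₗ
    LinearMap.snd R L M ∘ₗ (equivProd R).toLinearMap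

lemma rotaBaxter_apply (T : M →ₗ[R] L) (x : L × M) :
    rotaBaxter T ((equivProd R).symm x) = (equivProd R).symm (T x.2, 0) := rfl

lemma isRotaBaxter_rotaBaxter {T : M →ₗ[R] L} (hT : IsRelativeRotaBaxter T) :
    IsRotaBaxter (rotaBaxter T) := by
  intro x y
  obtain ⟨x, rfl⟩ := (equivProd R).symm.surjective x
  obtain ⟨y, rfl⟩ := (equivProd R).symm.surjective y
  simp only [rotaBaxter_apply, lie_symm_equivProd, ← map_add, Prod.mk_add_mk, lie_zero,
    sub_zero, zero_sub, sub_self, ← sub_eq_add_neg]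
  rw [hT]

lemma lie_rotaBaxter_inr (T : M →ₗ[R] L) (m n : M) :
    ⁅rotaBaxter T (inr R L m), inr R L n⁆ = inr R L ⁅T m, n⁆ := by
  simp only [inr_apply, rotaBaxter_apply, lie_symm_equivProd, lie_zero, sub_zero]

end SemidirectSum

end LieModule

namespace LeftPreLieAlgebra

open LieAlgebra LieModule

variable {R : Type u} {A : Type v} [CommRing R] [LeftPreLieRing A] [LeftPreLieAlgebra R A]

/-- The left regular representation, placed on `ULift A` because `A` already carries the adjoint
action; the lift also lets the semidirect sum reach any universe. -/
instance : LieRingModule A (ULift.{w} A) where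
  bracket a m := ULift.up (a * m.down)
  add_lie a b m := ULift.ext _ _ (add_mul a b m.down)
  lie_add a m n := ULift.ext _ _ (mul_add a m.down n.down)
  leibniz_lie a b m := ULift.ext _ _ <| by
    have hassoc := LeftPreLieRing.assoc_symm a b m.down
    rw [associator_apply, associator_apply] at hassoc
    change a * (b * m.down) = (a * b - b * a) * m.down + b * (a * m.down)
    rw [sub_mul]
    linear_combination (norm := abel) -hassoc

instance : LieModule R A (ULift.{w} A) where
  smul_lie t a m := ULift.ext _ _ (smul_mul_assoc t a m.down)
  lie_smul t a m := ULift.ext _ _ (mul_smul_comm t a m.down)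

lemma isRelativeRotaBaxter_down :
    IsRelativeRotaBaxter (ULift.moduleEquiv.toLinearMap : ULift.{w} A →ₗ[R] A) :=
  fun _ _ => Ring.lie_def _ _

theorem exists_rotaBaxter_embedding :
    ∃ (L : Type (max v w)) (_ : LieRing L) (_ : LieAlgebra R L) (P : L →ₗ[R] L) (ι : A →ₗ[R] L),
      IsRotaBaxter P ∧ Function.Injective ι ∧ ∀ x y : A, ι (x * y) = ⁅P (ι x), ι y⁆ :=
  ⟨SemidirectSum R A (ULift.{w} A), inferInstance, inferInstance,
    SemidirectSum.rotaBaxter ULift.moduleEquiv.toLinearMap,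
    SemidirectSum.inr R A ∘ₗ ULift.moduleEquiv.symm.toLinearMap,
    SemidirectSum.isRotaBaxter_rotaBaxter isRelativeRotaBaxter_down,
    SemidirectSum.inr_injective.comp ULift.moduleEquiv.symm.injective,
    fun x y => (SemidirectSum.lie_rotaBaxter_inr ULift.moduleEquiv.toLinearMap
      (ULift.up x) (ULift.up y)).symm⟩

end LeftPreLieAlgebra

namespace LinearMap

variable {R M : Type*} [CommRing R] [AddCommGroup M] [Module R M] (mul : M →ₗ[R] M →ₗ[R] M)
  (h : ∀ x y z, mul (mul x y) z - mul x (mul y z) = mul (mul y x) z - mul y (mul x z))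

abbrev leftPreLieRing : LeftPreLieRing M where
  mul x y := mul x y
  left_distrib x y z := map_add (mul x) y z
  right_distrib x y z := map_add₂ mul x y z
  zero_mul x := map_zero₂ mul x
  mul_zero x := map_zero (mul x)
  assoc_symm' := h

abbrev leftPreLieAlgebra : @LeftPreLieAlgebra R _ M (mul.leftPreLieRing h) :=
  let _ := mul.leftPreLieRing h
  { smul_assoc t x y := map_smul₂ mul t x y
    smul_comm t x y := (map_smul (mul x) t y).symm }

end LinearMap

theorem stmt12_general {k : Type u} [Field k]
    {C : Type v} [AddCommGroup C] [Module k C]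
    (mul : C →ₗ[k] C →ₗ[k] C)
    (hpre : ∀ x₁ x₂ x₃ : C,
      mul (mul x₁ x₂) x₃ - mul x₁ (mul x₂ x₃) = mul (mul x₂ x₁) x₃ - mul x₂ (mul x₁ x₃)) :
    ∃ (L : Type (max u v)) (_ : LieRing L) (_ : LieAlgebra k L)
      (P : L →ₗ[k] L) (ι : C →ₗ[k] L),
      (∀ x y : L, ⁅P x, P y⁆ = P (⁅P x, y⁆ + ⁅x, P y⁆)) ∧
      Function.Injective ι ∧
      (∀ x y : C, ι (mul x y) = ⁅P (ι x), ι y⁆) := by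
  let _ := mul.leftPreLieRing hpre
  let _ := mul.leftPreLieAlgebra hpre
  exact LeftPreLieAlgebra.exists_rotaBaxter_embedding (R := k) (A := C)

theorem stmt12 {k : Type u} [Field k] [CharZero k]
    {C : Type v} [AddCommGroup C] [Module k C]
    (mul : C →ₗ[k] C →ₗ[k] C)
    (hpre : ∀ x₁ x₂ x₃ : C,
      mul (mul x₁ x₂) x₃ - mul x₁ (mul x₂ x₃) = mul (mul x₂ x₁) x₃ - mul x₂ (mul x₁ x₃)) :
    ∃ (L : Type (max u v)) (_ : LieRing L) (_ : LieAlgebra k L)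
      (P : L →ₗ[k] L) (ι : C →ₗ[k] L),
      (∀ x y : L, ⁅P x, P y⁆ = P (⁅P x, y⁆ + ⁅x, P y⁆)) ∧
      Function.Injective ι ∧
      (∀ x y : C, ι (mul x y) = ⁅P (ι x), ι y⁆) :=
  stmt12_general mul hpre
end
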